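/- Let P_G = P_{G_+} ∪ P_{G_-} be a decomposition of the edge polytope of a finite connected simple graph G. Then P_G is normal if and only if both P_{G_+} and P_{G_-} are normal. Equivalently (via the odd cycle criterion): G satisfies the odd cycle condition if and only if both G_+ and G_- do. -/

import Mathlib

open scoped Pointwise

open scoped BigOperators

/-- `ρ(i,j) = e_i + e_j` -/
noncomputable def rho {d : ℕ} (i j : Fin d) : Fin d → ℝ :=
  fun t => (if t = i then 1 else 0) + (if t = j then 1 else 0)

/-- The edge polytope of a graph `G` on `[d]`. -/
noncomputable def edgePolytope {d : ℕ} (G : SimpleGraph (Fin d)) : Set (Fin d → ℝ) :=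
  convexHull ℝ {x | ∃ i j, G.Adj i j ∧ x = rho i j}

/-- dot product -/
def dotp {d : ℕ} (a x : Fin d → ℝ) : ℝ := ∑ t, a t * x t

/-- a polytope is integral if all its vertices (extreme points) are lattice points -/
def IsIntegralSet {d : ℕ} (P : Set (Fin d → ℝ)) : Prop :=
  ∀ x ∈ Set.extremePoints ℝ P, ∀ t, ∃ z : ℤ, x t = (z : ℝ)

/-- The hyperplane `a·x = b` decomposes `P`: it meets the relative interior of `P`,
both open sides meet `P`, and both closed half-space pieces are integral. -/
def Decomposes {d : ℕ} (P : Set (Fin d → ℝ)) (a : Fin d → ℝ) (b : ℝ) : Prop :=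
  (∃ x ∈ intrinsicInterior ℝ P, dotp a x = b) ∧
  (∃ y ∈ P, dotp a y < b) ∧ (∃ y ∈ P, b < dotp a y) ∧
  IsIntegralSet (P ∩ {x | b ≤ dotp a x}) ∧
  IsIntegralSet (P ∩ {x | dotp a x ≤ b})

/-- An integral polytope P is normal: every lattice point of N*P is a sum of N lattice
points of P. -/
def IsNormalPolytope {d : ℕ} (P : Set (Fin d → ℝ)) : Prop :=
  ∀ N : ℕ, 0 < N → ∀ x : Fin d → ℝ, x ∈ (N : ℝ) • P → (∀ t, ∃ z : ℤ, x t = (z : ℝ)) →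
    ∃ f : Fin N → (Fin d → ℝ),
      (∀ m, f m ∈ P ∧ ∀ t, ∃ z : ℤ, f m t = (z : ℝ)) ∧ x = ∑ m, f m

/-!
If both closed halves of `P_G` cut by `a · x = 0` are integral, their vertices are lattice points
of `P_G`, i.e. edge vectors `ρ(i,j)`; so the halves are `P_{G_+}` and `P_{G_-}`, and the slice
`a · x = 0`, a face of `P_{G_+}`, is the edge polytope of the zero edges. For a positive edge `ij`
and a negative edge `kl`, the point of the segment `[ρ(i,j), ρ(k,l)]` on the hyperplane is then a
convex combination of zero edges supported on `{i, j, k, l}`, so each of these vertices has a zero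
neighbour among them, which gives zero edges `pq`, `rs` with `ρ(i,j) + ρ(k,l) = ρ(p,q) + ρ(r,s)`.
Trading such pairs turns a representation `x = ρ₁ + ⋯ + ρ_N` with `a · x ≥ 0` into one by edges
of `G_+`: normality passes from `P_G` to `P_{G_+}`, and to `P_{G_-}` by symmetry. Conversely
`P_G = P_{G_+} ∪ P_{G_-}`, and a union of normal polytopes is normal.
-/

open Set

lemma isExtreme_inter_nonpos {E : Type*} [AddCommGroup E] [Module ℝ E] {K : Set E}
    {f : E →ₗ[ℝ] ℝ} (hK : ∀ y ∈ K, 0 ≤ f y) : IsExtreme ℝ K (K ∩ {x | f x ≤ 0}) := by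
  refine ⟨inter_subset_left, fun y hy z hz x hx ⟨s, t, hs, ht, _, hxyz⟩ => ⟨hy, ?_⟩⟩
  subst hxyz
  have hfx : s * f y + t * f z ≤ 0 := by
    simpa only [mem_ofPred_eq, map_add, map_smul, smul_eq_mul] using hx.2
  have := hK z hz
  show f y ≤ 0
  nlinarith

lemma exists_convexCombo_eq_zero {α β : ℝ} (hα : 0 < α) (hβ : β < 0) :
    ∃ t, 0 < t ∧ t < 1 ∧ t * α + (1 - t) * β = 0 := by
  have hαβ : 0 < α - β := by linarith
  refine ⟨-β / (α - β), div_pos (by linarith) hαβ, (div_lt_one hαβ).2 (by linarith), ?_⟩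
  field_simp
  ring

lemma sum_update_update {ι M : Type*} [Fintype ι] [DecidableEq ι] [AddCommMonoid M]
    (f : ι → M) {p q : ι} (hpq : p ≠ q) {u v : M} (h : u + v = f p + f q) :
    ∑ m, Function.update (Function.update f p u) q v m = ∑ m, f m := by
  rw [Finset.sum_update_of_mem (Finset.mem_univ q), Finset.sum_update_of_mem (by simpa using hpq),
    ← Finset.add_sum_erase _ _ (Finset.mem_univ q),
    ← Finset.add_sum_erase _ _ (Finset.mem_erase.2 ⟨hpq, Finset.mem_univ p⟩),
    Finset.sdiff_singleton_eq_erase, Finset.sdiff_singleton_eq_erase, add_left_comm, ← add_assoc, h]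
  abel

theorem exists_nonneg_of_exchange {ι M : Type*} [Fintype ι] [DecidableEq ι] [AddCommMonoid M]
    (φ : M →+ ℝ) {V : Set M}
    (hex : ∀ u ∈ V, ∀ v ∈ V, 0 < φ u → φ v < 0 →
      ∃ u' ∈ V, ∃ v' ∈ V, φ u' = 0 ∧ φ v' = 0 ∧ u + v = u' + v')
    (f : ι → M) (hf : ∀ m, f m ∈ V) (hsum : 0 ≤ φ (∑ m, f m)) :
    ∃ g : ι → M, (∀ m, g m ∈ V ∧ 0 ≤ φ (g m)) ∧ ∑ m, g m = ∑ m, f m := by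
  suffices key : ∀ S : Finset ι, ∀ f : ι → M, (∀ m, f m ∈ V) → 0 ≤ φ (∑ m, f m) →
      (∀ m, φ (f m) < 0 → m ∈ S) →
      ∃ g : ι → M, (∀ m, g m ∈ V ∧ 0 ≤ φ (g m)) ∧ ∑ m, g m = ∑ m, f m from
    key Finset.univ f hf hsum fun m _ => Finset.mem_univ m
  -- Each exchange turns a negative summand and a positive one into two zero summands.
  intro S
  induction S using Finset.induction_on with
  | empty =>
    intro f hf _ hS
    exact ⟨f, fun m => ⟨hf m, not_lt.1 fun h => Finset.notMem_empty m (hS m h)⟩, rfl⟩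
  | insert p S _ ih =>
    intro f hf hsum hS
    by_cases hp : φ (f p) < 0
    · obtain ⟨q, hq⟩ : ∃ q, 0 < φ (f q) := by
        by_contra! h
        have := Finset.sum_lt_sum (fun m _ => h m) ⟨p, Finset.mem_univ p, hp⟩
        rw [map_sum] at hsum
        simp only [Finset.sum_const_zero] at this
        linarith
      have hqp : q ≠ p := by rintro rfl; linarith
      obtain ⟨u, hu, v, hv, hu₀, hv₀, huv⟩ := hex (f q) (hf q) (f p) (hf p) hq hp
      set f' := Function.update (Function.update f q u) p v
      have hsum' : ∑ m, f' m = ∑ m, f m := sum_update_update f hqp huv.symm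
      have hf' : ∀ m, f' m ∈ V ∧ (φ (f' m) < 0 → m ∈ S) := by
        intro m
        by_cases hmp : m = p
        · subst hmp; simp [f', hv, hv₀]
        by_cases hmq : m = q
        · subst hmq; simp [f', hmp, hu, hu₀]
        simp only [f', Function.update_of_ne hmp, Function.update_of_ne hmq]
        exact ⟨hf m, fun h => (Finset.mem_insert.1 (hS m h)).resolve_left hmp⟩
      obtain ⟨g, hg, hgsum⟩ :=
        ih f' (fun m => (hf' m).1) (hsum' ▸ hsum) fun m => (hf' m).2
      exact ⟨g, hg, hgsum.trans hsum'⟩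
    · refine ih f hf hsum fun m hm => (Finset.mem_insert.1 (hS m hm)).resolve_left ?_
      rintro rfl
      exact hp hm

section DotProduct

variable {d : ℕ}

lemma dotp_rho (a : Fin d → ℝ) (i j : Fin d) : dotp a (rho i j) = a i + a j := by
  simp [dotp, rho, mul_add, Finset.sum_add_distrib]

lemma dotp_neg (a x : Fin d → ℝ) : dotp (-a) x = -dotp a x := neg_dotProduct a x

lemma dotp_add (a x y : Fin d → ℝ) : dotp a (x + y) = dotp a x + dotp a y :=
  dotProduct_add a x y

lemma dotp_smul (a x : Fin d → ℝ) (s : ℝ) : dotp a (s • x) = s * dotp a x :=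
  dotProduct_smul s a x

lemma isLinearMap_dotp (a : Fin d → ℝ) : IsLinearMap ℝ (dotp a) :=
  (dotProductBilin ℝ ℝ a).isLinear

lemma continuous_dotp (a : Fin d → ℝ) : Continuous (dotp a) :=
  continuous_const.dotProduct continuous_id

end DotProduct

section EdgePolytope

variable {d : ℕ} {G H : SimpleGraph (Fin d)} {w : Fin d → ℝ}

lemma exists_rho_apply_eq_intCast (i j t : Fin d) : ∃ z : ℤ, rho i j t = z :=
  ⟨(if t = i then 1 else 0) + (if t = j then 1 else 0), by simp only [rho]; push_cast; rfl⟩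

lemma rho_mem_edgePolytope {i j : Fin d} (h : G.Adj i j) : rho i j ∈ edgePolytope G :=
  subset_convexHull ℝ _ ⟨i, j, h, rfl⟩

lemma edgePolytope_subset {K : Set (Fin d → ℝ)} (hK : Convex ℝ K)
    (h : ∀ i j, G.Adj i j → rho i j ∈ K) : edgePolytope G ⊆ K :=
  convexHull_min (by rintro _ ⟨i, j, hij, rfl⟩; exact h i j hij) hK

lemma isCompact_edgePolytope (G : SimpleGraph (Fin d)) : IsCompact (edgePolytope G) := by
  refine Set.Finite.isCompact_convexHull ℝ <|
    (Set.finite_range fun p : Fin d × Fin d => rho p.1 p.2).subset ?_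
  rintro _ ⟨i, j, -, rfl⟩
  exact ⟨(i, j), rfl⟩

lemma dotp_mem_of_mem_edgePolytope {c : Fin d → ℝ} {I : Set ℝ} (hI : Convex ℝ I)
    (h : ∀ i j, G.Adj i j → c i + c j ∈ I) (hw : w ∈ edgePolytope G) : dotp c w ∈ I :=
  edgePolytope_subset (hI.is_linear_preimage (isLinearMap_dotp c))
    (fun i j hij => by simpa [dotp_rho] using h i j hij) hw

lemma apply_mem_Icc_of_mem_edgePolytope (hw : w ∈ edgePolytope G) (t : Fin d) :
    w t ∈ Icc (0 : ℝ) 1 := by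
  have key := dotp_mem_of_mem_edgePolytope (c := Pi.single t 1) (convex_Icc 0 1)
    (fun i j hij => ?_) hw
  · simpa [dotp, ← dotProduct.eq_1, single_dotProduct] using key
  · have := hij.ne
    simp only [Pi.single_apply, mem_Icc]
    split_ifs <;> simp_all

lemma sum_eq_two_of_mem_edgePolytope (hw : w ∈ edgePolytope G) : ∑ t, w t = 2 := by
  have key := dotp_mem_of_mem_edgePolytope (c := 1) (convex_singleton 2)
    (fun i j _ => by norm_num) hw
  simpa [dotp, ← dotProduct.eq_1, one_dotProduct] using key

lemma exists_adj_of_mem_edgePolytope (hw : w ∈ edgePolytope H) {v : Fin d} (hv : w v ≠ 0) :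
    ∃ m, w m ≠ 0 ∧ H.Adj v m := by
  by_contra! hno
  -- `c` scores every edge of `H` at most 2 but scores `w` at `2 + w v / 2`.
  set c : Fin d → ℝ := fun t => (if w t = 0 then 0 else 1) + if t = v then 1 / 2 else 0
  have hle : dotp c w ≤ 2 := by
    refine dotp_mem_of_mem_edgePolytope (convex_Iic 2) (fun p q hpq => ?_) hw
    have hp : p = v → w q = 0 := fun h => by_contra fun hq => hno q hq (h ▸ hpq)
    have hq : q = v → w p = 0 := fun h => by_contra fun hp => hno p hp (h ▸ hpq.symm)
    have := hpq.ne
    simp only [c, mem_Iic]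
    split_ifs <;> grind
  have heq : dotp c w = 2 + w v / 2 := by
    have hterm : ∀ t, c t * w t = w t + if t = v then w v / 2 else 0 := by
      intro t
      by_cases h : w t = 0 <;> split_ifs <;> simp_all [c]; ring
    simp only [dotp, hterm, Finset.sum_add_distrib, Finset.sum_ite_eq', Finset.mem_univ,
      if_true, sum_eq_two_of_mem_edgePolytope hw]
  have hpos : 0 < w v := lt_of_le_of_ne (apply_mem_Icc_of_mem_edgePolytope hw v).1 (Ne.symm hv)
  linarith

lemma exists_eq_rho_of_mem_edgePolytope (hw : w ∈ edgePolytope G)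
    (hint : ∀ t, ∃ z : ℤ, w t = z) : ∃ i j, G.Adj i j ∧ w = rho i j := by
  have h01 : ∀ t, w t = 0 ∨ w t = 1 := by
    intro t
    obtain ⟨z, hz⟩ := hint t
    obtain ⟨h0, h1⟩ := apply_mem_Icc_of_mem_edgePolytope hw t
    rw [hz] at h0 h1 ⊢
    have : z = 0 ∨ z = 1 := by
      have : (0 : ℤ) ≤ z := by exact_mod_cast h0
      have : z ≤ 1 := by exact_mod_cast h1
      omega
    rcases this with rfl | rfl <;> simp
  obtain ⟨i, hi⟩ : ∃ i, w i ≠ 0 := by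
    by_contra! h
    simpa [h] using sum_eq_two_of_mem_edgePolytope hw
  obtain ⟨j, hj, hij⟩ := exists_adj_of_mem_edgePolytope hw hi
  refine ⟨i, j, hij, ?_⟩
  have hle : ∀ t ∈ Finset.univ, rho i j t ≤ w t := by
    intro t _
    have := hij.ne
    have := (apply_mem_Icc_of_mem_edgePolytope hw t).1
    simp only [rho]
    split_ifs <;> grind
  have heq := (Finset.sum_eq_sum_iff_of_le hle).1 (by
    rw [sum_eq_two_of_mem_edgePolytope (rho_mem_edgePolytope hij),
      sum_eq_two_of_mem_edgePolytope hw])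
  exact funext fun t => (heq t (Finset.mem_univ t)).symm

end EdgePolytope

namespace SimpleGraph

/-- `G_+`, `G_-` and the graph of zero edges are `G.weightSubgraph a p` for `p` equal to
`(0 ≤ ·)`, `(· ≤ 0)` and `(· = 0)`. -/
def weightSubgraph {V : Type*} (G : SimpleGraph V) (a : V → ℝ) (p : ℝ → Prop) :
    SimpleGraph V :=
  fromRel fun i j => G.Adj i j ∧ p (a i + a j)

@[simp]
lemma weightSubgraph_adj {V : Type*} {G : SimpleGraph V} {a : V → ℝ} {p : ℝ → Prop} {i j : V} :
    (G.weightSubgraph a p).Adj i j ↔ G.Adj i j ∧ p (a i + a j) := by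
  simp only [weightSubgraph, fromRel_adj]
  constructor
  · rintro ⟨-, h | ⟨h, hp⟩⟩
    · exact h
    · exact ⟨h.symm, add_comm (a i) (a j) ▸ hp⟩
  · intro h
    exact ⟨h.1.ne, Or.inl h⟩

lemma weightSubgraph_neg {V : Type*} (G : SimpleGraph V) (a : V → ℝ) (p : ℝ → Prop) :
    G.weightSubgraph (-a) p = G.weightSubgraph a fun s => p (-s) := by
  ext i j
  simp only [weightSubgraph_adj, Pi.neg_apply, neg_add]

end SimpleGraph

section IntegralSlices

variable {d : ℕ} {G : SimpleGraph (Fin d)} {a : Fin d → ℝ}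

lemma subset_edgePolytope_of_isIntegralSet {H : SimpleGraph (Fin d)} {K : Set (Fin d → ℝ)}
    (hKG : K ⊆ edgePolytope G) (hKc : IsCompact K) (hKconv : Convex ℝ K)
    (hK : IsIntegralSet K) (hH : ∀ i j, G.Adj i j → rho i j ∈ K → H.Adj i j) :
    K ⊆ edgePolytope H := by
  have hext : extremePoints ℝ K ⊆ {x | ∃ i j, H.Adj i j ∧ x = rho i j} := by
    intro y hy
    have hyK := extremePoints_subset hy
    obtain ⟨i, j, hij, rfl⟩ := exists_eq_rho_of_mem_edgePolytope (hKG hyK) (hK y hy)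
    exact ⟨i, j, hH i j hij hyK, rfl⟩
  rw [← closure_convexHull_extremePoints hKc hKconv]
  exact (isCompact_edgePolytope H).isClosed.closure_subset_iff.2 (convexHull_mono hext)

lemma edgePolytope_inter_nonneg_eq
    (hint : IsIntegralSet (edgePolytope G ∩ {x | 0 ≤ dotp a x})) :
    edgePolytope G ∩ {x | 0 ≤ dotp a x} = edgePolytope (G.weightSubgraph a (0 ≤ ·)) := by
  refine Subset.antisymm ?_ ?_
  · refine subset_edgePolytope_of_isIntegralSet inter_subset_left ?_ ?_ hint ?_
    · exact (isCompact_edgePolytope G).inter_right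
        (isClosed_le continuous_const (continuous_dotp a))
    · exact (convex_convexHull ℝ _).inter (convex_halfSpace_ge (isLinearMap_dotp a) 0)
    · intro i j hij hK
      simpa [dotp_rho, hij] using hK.2
  · refine edgePolytope_subset
      ((convex_convexHull ℝ _).inter (convex_halfSpace_ge (isLinearMap_dotp a) 0)) ?_
    intro i j hij
    rw [SimpleGraph.weightSubgraph_adj] at hij
    exact ⟨rho_mem_edgePolytope hij.1, by simpa [dotp_rho] using hij.2⟩

lemma edgePolytope_inter_zero_subset
    (hint : IsIntegralSet (edgePolytope G ∩ {x | 0 ≤ dotp a x})) :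
    edgePolytope G ∩ {x | dotp a x = 0} ⊆ edgePolytope (G.weightSubgraph a (· = 0)) := by
  have hslice : edgePolytope G ∩ {x | dotp a x = 0}
      = (edgePolytope G ∩ {x | 0 ≤ dotp a x}) ∩ {x | dotp a x ≤ 0} := by
    ext x
    simp only [mem_inter_iff, mem_ofPred_eq]
    constructor
    · rintro ⟨hx, h⟩
      exact ⟨⟨hx, h.ge⟩, h.le⟩
    · rintro ⟨⟨hx, h₁⟩, h₂⟩
      exact ⟨hx, le_antisymm h₂ h₁⟩
  have hface := isExtreme_inter_nonpos (K := edgePolytope G ∩ {x | 0 ≤ dotp a x})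
    (f := dotProductBilin ℝ ℝ a) fun y hy => hy.2
  refine hslice ▸ subset_edgePolytope_of_isIntegralSet (inter_subset_left.trans inter_subset_left)
    ?_ ?_ (fun x hx => hint x (hface.extremePoints_subset_extremePoints hx)) ?_
  · exact ((isCompact_edgePolytope G).inter_right
      (isClosed_le continuous_const (continuous_dotp a))).inter_right
      (isClosed_le (continuous_dotp a) continuous_const)
  · exact ((convex_convexHull ℝ _).inter (convex_halfSpace_ge (isLinearMap_dotp a) 0)).inter
      (convex_halfSpace_le (isLinearMap_dotp a) 0)
  · rintro i j hij ⟨⟨-, h₁⟩, h₂⟩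
    simp only [mem_ofPred_eq, dotp_rho] at h₁ h₂
    exact SimpleGraph.weightSubgraph_adj.2 ⟨hij, le_antisymm h₂ h₁⟩

lemma edgePolytope_inter_nonpos_eq
    (hint : IsIntegralSet (edgePolytope G ∩ {x | dotp a x ≤ 0})) :
    edgePolytope G ∩ {x | dotp a x ≤ 0} = edgePolytope (G.weightSubgraph a (· ≤ 0)) := by
  have := edgePolytope_inter_nonneg_eq (a := -a) (by simpa only [dotp_neg, neg_nonneg] using hint)
  simpa only [dotp_neg, neg_nonneg, SimpleGraph.weightSubgraph_neg] using this

lemma edgePolytope_eq_union (hpos : IsIntegralSet (edgePolytope G ∩ {x | 0 ≤ dotp a x}))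
    (hneg : IsIntegralSet (edgePolytope G ∩ {x | dotp a x ≤ 0})) :
    edgePolytope G = edgePolytope (G.weightSubgraph a (0 ≤ ·)) ∪
      edgePolytope (G.weightSubgraph a (· ≤ 0)) := by
  rw [← edgePolytope_inter_nonneg_eq hpos, ← edgePolytope_inter_nonpos_eq hneg,
    ← inter_union_distrib_left]
  exact (inter_eq_left.2 fun x _ => le_total 0 (dotp a x)).symm

end IntegralSlices

section Exchange

variable {d : ℕ} {G : SimpleGraph (Fin d)} {a : Fin d → ℝ}

lemma exists_zero_edges_of_pos_neg
    (hz : edgePolytope G ∩ {x | dotp a x = 0} ⊆ edgePolytope (G.weightSubgraph a (· = 0)))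
    {i j k l : Fin d} (hij : G.Adj i j) (hkl : G.Adj k l) (hpos : 0 < a i + a j)
    (hneg : a k + a l < 0) :
    ∃ p q r s, (G.weightSubgraph a (· = 0)).Adj p q ∧ (G.weightSubgraph a (· = 0)).Adj r s ∧
      rho i j + rho k l = rho p q + rho r s := by
  set G₀ := G.weightSubgraph a (· = 0)
  obtain ⟨t, ht0, ht1, ht⟩ := exists_convexCombo_eq_zero hpos hneg
  set w := t • rho i j + (1 - t) • rho k l
  have hw : w ∈ edgePolytope G₀ := by
    refine hz ⟨convex_convexHull ℝ _ (rho_mem_edgePolytope hij) (rho_mem_edgePolytope hkl)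
      ht0.le (by linarith) (by ring), ?_⟩
    simpa [w, dotp_add, dotp_smul, dotp_rho] using ht
  have hsupp : ∀ v, w v ≠ 0 ↔ v = i ∨ v = j ∨ v = k ∨ v = l := by
    intro v
    have : 0 < 1 - t := by linarith
    simp only [w, rho, Pi.add_apply, Pi.smul_apply, smul_eq_mul]
    split_ifs <;> simp_all <;> positivity
  have partner : ∀ v, v = i ∨ v = j ∨ v = k ∨ v = l →
      G₀.Adj v i ∨ G₀.Adj v j ∨ G₀.Adj v k ∨ G₀.Adj v l := by
    intro v hv
    obtain ⟨m, hm, hvm⟩ := exists_adj_of_mem_edgePolytope hw ((hsupp v).2 hv)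
    rcases (hsupp m).1 hm with rfl | rfl | rfl | rfl <;> simp [hvm]
  have hij₀ : ¬G₀.Adj i j := fun h => hpos.ne' (SimpleGraph.weightSubgraph_adj.1 h).2
  have hkl₀ : ¬G₀.Adj k l := fun h => hneg.ne (SimpleGraph.weightSubgraph_adj.1 h).2
  have hI := partner i (by simp)
  have hJ := partner j (by simp)
  have hK := partner k (by simp)
  have hL := partner l (by simp)
  simp only [G₀.adj_comm j i, G₀.adj_comm k i, G₀.adj_comm k j, G₀.adj_comm l i,
    G₀.adj_comm l j, G₀.adj_comm l k, SimpleGraph.irrefl, false_or, or_false] at hI hJ hK hL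
  have hmatch : (G₀.Adj i k ∧ G₀.Adj j l) ∨ (G₀.Adj i l ∧ G₀.Adj j k) := by tauto
  rcases hmatch with ⟨h₁, h₂⟩ | ⟨h₁, h₂⟩
  · exact ⟨i, k, j, l, h₁, h₂, by funext; simp only [rho, Pi.add_apply]; ring⟩
  · exact ⟨i, l, j, k, h₁, h₂, by funext; simp only [rho, Pi.add_apply]; ring⟩

end Exchange

section Normality

variable {d : ℕ}

lemma IsNormalPolytope.union {P Q : Set (Fin d → ℝ)} (hP : IsNormalPolytope P)
    (hQ : IsNormalPolytope Q) : IsNormalPolytope (P ∪ Q) := by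
  intro N hN x hx hint
  rw [Set.smul_set_union] at hx
  rcases hx with hx | hx
  · obtain ⟨f, hf, rfl⟩ := hP N hN x hx hint
    exact ⟨f, fun m => ⟨Or.inl (hf m).1, (hf m).2⟩, rfl⟩
  · obtain ⟨f, hf, rfl⟩ := hQ N hN x hx hint
    exact ⟨f, fun m => ⟨Or.inr (hf m).1, (hf m).2⟩, rfl⟩

lemma IsNormalPolytope.weightSubgraph_nonneg {G : SimpleGraph (Fin d)} {a : Fin d → ℝ}
    (hint : IsIntegralSet (edgePolytope G ∩ {x | 0 ≤ dotp a x}))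
    (h : IsNormalPolytope (edgePolytope G)) :
    IsNormalPolytope (edgePolytope (G.weightSubgraph a (0 ≤ ·))) := by
  rw [← edgePolytope_inter_nonneg_eq hint]
  intro N hN x hx hxint
  obtain ⟨y, ⟨hyP, hy⟩, rfl⟩ := Set.mem_smul_set.1 hx
  obtain ⟨f, hf, hsum⟩ := h N hN _ (Set.smul_mem_smul_set hyP) hxint
  set V := {x | ∃ i j, G.Adj i j ∧ x = rho i j}
  have hex : ∀ u ∈ V, ∀ v ∈ V, 0 < dotp a u → dotp a v < 0 →
      ∃ u' ∈ V, ∃ v' ∈ V, dotp a u' = 0 ∧ dotp a v' = 0 ∧ u + v = u' + v' := by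
    rintro _ ⟨i, j, hij, rfl⟩ _ ⟨k, l, hkl, rfl⟩ hpos hneg
    rw [dotp_rho] at hpos hneg
    obtain ⟨p, q, r, s, hpq, hrs, heq⟩ :=
      exists_zero_edges_of_pos_neg (edgePolytope_inter_zero_subset hint) hij hkl hpos hneg
    rw [SimpleGraph.weightSubgraph_adj] at hpq hrs
    exact ⟨_, ⟨p, q, hpq.1, rfl⟩, _, ⟨r, s, hrs.1, rfl⟩, by rw [dotp_rho, hpq.2],
      by rw [dotp_rho, hrs.2], heq⟩
  obtain ⟨g, hg, hgsum⟩ := exists_nonneg_of_exchange (AddMonoidHom.mk' (dotp a) (dotp_add a)) hex f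
    (fun m => exists_eq_rho_of_mem_edgePolytope (hf m).1 (hf m).2) (by
      rw [AddMonoidHom.mk'_apply, ← hsum, dotp_smul]
      exact mul_nonneg (Nat.cast_nonneg N) hy)
  refine ⟨g, fun m => ?_, hsum.trans hgsum.symm⟩
  obtain ⟨⟨i, j, hij, hgm⟩, hgm₀⟩ := hg m
  exact ⟨⟨hgm ▸ rho_mem_edgePolytope hij, hgm₀⟩, hgm ▸ exists_rho_apply_eq_intCast i j⟩

lemma IsNormalPolytope.weightSubgraph_nonpos {G : SimpleGraph (Fin d)} {a : Fin d → ℝ}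
    (hint : IsIntegralSet (edgePolytope G ∩ {x | dotp a x ≤ 0}))
    (h : IsNormalPolytope (edgePolytope G)) :
    IsNormalPolytope (edgePolytope (G.weightSubgraph a (· ≤ 0))) := by
  have := h.weightSubgraph_nonneg (a := -a) (by simpa only [dotp_neg, neg_nonneg] using hint)
  simpa only [SimpleGraph.weightSubgraph_neg, neg_nonneg] using this

end Normality

theorem stmt14_general {d : ℕ} (G : SimpleGraph (Fin d)) (a : Fin d → ℝ)
    (hdec : Decomposes (edgePolytope G) a 0) :
    IsNormalPolytope (edgePolytope G) ↔
      (IsNormalPolytope (edgePolytope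
          (SimpleGraph.fromRel fun i j => G.Adj i j ∧ 0 ≤ a i + a j)) ∧
       IsNormalPolytope (edgePolytope
          (SimpleGraph.fromRel fun i j => G.Adj i j ∧ a i + a j ≤ 0))) := by
  obtain ⟨-, -, -, hint_pos, hint_neg⟩ := hdec
  refine ⟨fun h => ⟨h.weightSubgraph_nonneg hint_pos, h.weightSubgraph_nonpos hint_neg⟩, ?_⟩
  rintro ⟨hpos, hneg⟩
  rw [edgePolytope_eq_union hint_pos hint_neg]
  exact hpos.union hneg

/-- in a decomposition P_G = P_{G_+} ∪ P_{G_-}, the edge polytope P_G is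
normal iff both P_{G_+} and P_{G_-} are normal. -/
theorem stmt14 {d : ℕ} (G : SimpleGraph (Fin d)) (hG : G.Connected) (a : Fin d → ℝ)
    (hdec : Decomposes (edgePolytope G) a 0) :
    IsNormalPolytope (edgePolytope G) ↔
      (IsNormalPolytope (edgePolytope
          (SimpleGraph.fromRel fun i j => G.Adj i j ∧ 0 ≤ a i + a j)) ∧
       IsNormalPolytope (edgePolytope
          (SimpleGraph.fromRel fun i j => G.Adj i j ∧ a i + a j ≤ 0))) :=
  stmt14_general G a hdec
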